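/- arXiv:0807.3529 — 2 statements merged into one kernel-verified Lean document; each statement's English description precedes it below -/
import Mathlib

section
/- Let n_0 > 6 be an integer and f = (f_n)_{2≤n≤n_0} a tuple of nonnegative integrable functions on [0,∞) satisfying the polyhedral formula P(f) = 0. Then Γ_D(f) ≥ (6 − 2(β+1)) N(f) = (4 − 2β) N(f) ≥ 0; in particular Γ_D(f) > 0 whenever N(f) > 0. -/
open MeasureTheory Set

noncomputable section

namespace GrainGrowth

/-- Collision operator for the infinite system (topological classes `n ≥ 2`):
`(Jf)_2 = 3(β+1)f_3 − 2β f_2`,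
`(Jf)_n = (β+1)(n+1)f_{n+1} − (2β+1)n f_n + β(n−1)f_{n−1}` for `n > 2`. -/
def Jinf (β : ℝ) (f : ℕ → ℝ → ℝ) (n : ℕ) (a : ℝ) : ℝ :=
  if n = 2 then 3 * (β + 1) * f 3 a - 2 * β * f 2 a
  else (β + 1) * ((n : ℝ) + 1) * f (n + 1) a - (2 * β + 1) * (n : ℝ) * f n a
       + β * ((n : ℝ) - 1) * f (n - 1) a

/-- Truncated collision operator `J = J_+ − J_−` for `2 ≤ n ≤ n0`. -/
def Jtr (β : ℝ) (n0 : ℕ) (f : ℕ → ℝ → ℝ) (n : ℕ) (a : ℝ) : ℝ :=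
  if n = 2 then 3 * (β + 1) * f 3 a - 2 * β * f 2 a
  else if n = n0 then
    β * ((n0 : ℝ) - 1) * f (n0 - 1) a - (β + 1) * (n0 : ℝ) * f n0 a
  else (β + 1) * ((n : ℝ) + 1) * f (n + 1) a - (2 * β + 1) * (n : ℝ) * f n a
       + β * ((n : ℝ) - 1) * f (n - 1) a

/-- Gain part `J_+` of the truncated collision operator. -/
def JtrPlus (β : ℝ) (n0 : ℕ) (f : ℕ → ℝ → ℝ) (n : ℕ) (a : ℝ) : ℝ :=
  if n = 2 then 3 * (β + 1) * f 3 a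
  else if n = n0 then β * ((n0 : ℝ) - 1) * f (n0 - 1) a
  else (β + 1) * ((n : ℝ) + 1) * f (n + 1) a + β * ((n : ℝ) - 1) * f (n - 1) a

/-- Loss part `J_−` of the truncated collision operator. -/
def JtrMinus (β : ℝ) (n0 : ℕ) (f : ℕ → ℝ → ℝ) (n : ℕ) (a : ℝ) : ℝ :=
  if n = 2 then 2 * β * f 2 a
  else if n = n0 then (β + 1) * (n0 : ℝ) * f n0 a
  else (2 * β + 1) * (n : ℝ) * f n a

/-- Relaxation constants: `u_2 = 2β`, `u_{n_0} = (β+1)n_0`, `u_n = (2β+1)n` otherwise. -/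
def uRelax (β : ℝ) (n0 : ℕ) (n : ℕ) : ℝ :=
  if n = 2 then 2 * β
  else if n = n0 then (β + 1) * (n0 : ℝ)
  else (2 * β + 1) * (n : ℝ)

/-- The stationary supersolution `φ_n = (1/(nβ))(β/(1+β))^n`. -/
def phiGG (β : ℝ) (n : ℕ) : ℝ := (1 / ((n : ℝ) * β)) * (β / (1 + β)) ^ n

/-- The set of values `|f_n(a)|/φ_n`, `2 ≤ n ≤ n0`, `a ≥ 0`, whose supremum is `⦀f⦀`. -/
def bnormSet (β : ℝ) (n0 : ℕ) (f : ℕ → ℝ → ℝ) : Set ℝ :=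
  {r | ∃ n, 2 ≤ n ∧ n ≤ n0 ∧ ∃ a : ℝ, 0 ≤ a ∧ r = |f n a| / phiGG β n}

/-- Weighted sup norm `⦀f⦀ = sup_{2≤n≤n0} sup_{a≥0} |f_n(a)|/φ_n`. -/
def bnorm (β : ℝ) (n0 : ℕ) (f : ℕ → ℝ → ℝ) : ℝ := sSup (bnormSet β n0 f)

/-- Values `|f_n(a)|/φ_n` for the infinite system. -/
def bnormSetInf (β : ℝ) (f : ℕ → ℝ → ℝ) : Set ℝ :=
  {r | ∃ n, 2 ≤ n ∧ ∃ a : ℝ, 0 ≤ a ∧ r = |f n a| / phiGG β n}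

/-- Weighted sup norm for the infinite system. -/
def bnormInf (β : ℝ) (f : ℕ → ℝ → ℝ) : ℝ := sSup (bnormSetInf β f)

/-- Transport (semigroup) operator: `(T_c(t)u)(a) = u(a − ct)` if `c ≤ 0` or `a ≥ ct`,
and `0` otherwise. -/
def Tc (c : ℝ) (t : ℝ) (u : ℝ → ℝ) (a : ℝ) : ℝ :=
  if c ≤ 0 ∨ c * t ≤ a then u (a - c * t) else 0

/-- Relaxation–transport operators
`(T_Γ^−(s,t)f)_n = exp(−u_n ∫_s^t Γ) · T_{n−6}(t−s) f_n`. -/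
def TGm (β : ℝ) (n0 : ℕ) (Γ : ℝ → ℝ) (s t : ℝ) (f : ℕ → ℝ → ℝ) (n : ℕ) (a : ℝ) : ℝ :=
  Real.exp (-(uRelax β n0 n) * ∫ σ in s..t, Γ σ) * Tc ((n : ℝ) - 6) (t - s) (f n) a

/-- Number of grains `N(f) = Σ_{n=2}^{n0} ∫_0^∞ f_n(a) da`. -/
def Ngr (n0 : ℕ) (f : ℕ → ℝ → ℝ) : ℝ :=
  ∑ n ∈ Finset.Icc 2 n0, ∫ a in Ioi (0 : ℝ), f n a

/-- Total area `A(f) = Σ_{n=2}^{n0} ∫_0^∞ a f_n(a) da`. -/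
def Agr (n0 : ℕ) (f : ℕ → ℝ → ℝ) : ℝ :=
  ∑ n ∈ Finset.Icc 2 n0, ∫ a in Ioi (0 : ℝ), a * f n a

/-- Polyhedral defect `P(f) = Σ_{n=2}^{n0} (n−6) ∫_0^∞ f_n(a) da`. -/
def Pgr (n0 : ℕ) (f : ℕ → ℝ → ℝ) : ℝ :=
  ∑ n ∈ Finset.Icc 2 n0, ((n : ℝ) - 6) * ∫ a in Ioi (0 : ℝ), f n a

/-- `Γ_N(f) = Σ_{n=2}^{5} (n−6)² f_n(0)`. -/
def GammaN (f : ℕ → ℝ → ℝ) : ℝ :=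
  ∑ n ∈ Finset.Icc (2 : ℕ) 5, ((n : ℝ) - 6) ^ 2 * f n 0

/-- `Γ_D(f) = −Σ_{n=2}^{n0} n ∫_0^∞ (Jf)_n(a) da`. -/
def GammaD (β : ℝ) (n0 : ℕ) (f : ℕ → ℝ → ℝ) : ℝ :=
  - ∑ n ∈ Finset.Icc 2 n0, (n : ℝ) * ∫ a in Ioi (0 : ℝ), Jtr β n0 f n a

/-- `Γ(f) = Γ_N(f)/Γ_D(f)`. -/
def GammaW (β : ℝ) (n0 : ℕ) (f : ℕ → ℝ → ℝ) : ℝ := GammaN f / GammaD β n0 f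

/-- `Γ̄(t) = sup_{0≤s≤t} Γ(f(s))`. -/
def GammaBar (β : ℝ) (n0 : ℕ) (f : ℝ → ℕ → ℝ → ℝ) (t : ℝ) : ℝ :=
  sSup ((fun s => GammaW β n0 (f s)) '' Icc 0 t)

/-- First quasi-complement
`N⊥(f,α,ν) = Σ_{n=ν+1}^{n0} ∫_0^α f_n + Σ_{n=2}^{n0} ∫_α^∞ f_n` (with `f_1 ≡ 0`). -/
def NperpGen (n0 : ℕ) (f : ℕ → ℝ → ℝ) (α : ℝ) (ν : ℕ) : ℝ :=
  (∑ n ∈ Finset.Icc (max (ν + 1) 2) n0, ∫ a in (0 : ℝ)..α, f n a)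
  + ∑ n ∈ Finset.Icc 2 n0, ∫ a in Ioi α, f n a

/-- `N⊥(f,α) := N⊥(f,α,⌊α⌋)`. -/
def Nperp (n0 : ℕ) (f : ℕ → ℝ → ℝ) (α : ℝ) : ℝ := NperpGen n0 f α ⌊α⌋₊

/-- Second quasi-complement
`M⊥(f,α) = Σ_{n=⌊α⌋+1}^{n0} n ∫_0^∞ f_n + Σ_{n=2}^{n0} ∫_α^∞ a f_n` (with `f_1 ≡ 0`). -/
def Mperp (n0 : ℕ) (f : ℕ → ℝ → ℝ) (α : ℝ) : ℝ :=
  (∑ n ∈ Finset.Icc (max (⌊α⌋₊ + 1) 2) n0, (n : ℝ) * ∫ a in Ioi (0 : ℝ), f n a)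
  + ∑ n ∈ Finset.Icc 2 n0, ∫ a in Ioi α, a * f n a

/-- Mild solution of the (truncated) approximate system on `[0,T]` with initial data `g`:
a family of bounded functions, continuous in `(t,a)`, satisfying
`f_n(·,t) = T_{n−6}(t)g_n + ∫_0^t T_{n−6}(t−s)[Γ(f(s)) (Jf(s))_n] ds`. -/
def IsMildApprox (β : ℝ) (n0 : ℕ) (T : ℝ) (g : ℕ → ℝ → ℝ) (f : ℝ → ℕ → ℝ → ℝ) : Prop :=
  (∀ n, 2 ≤ n → n ≤ n0 →
      ContinuousOn (fun p : ℝ × ℝ => f p.1 n p.2) (Icc 0 T ×ˢ Ici 0)) ∧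
  (∀ t ∈ Icc (0 : ℝ) T, ∀ n, ∃ B, ∀ a, 0 ≤ a → |f t n a| ≤ B) ∧
  (∀ t ∈ Icc (0 : ℝ) T, ∀ n, 2 ≤ n → n ≤ n0 → ∀ a, 0 ≤ a →
    f t n a = Tc ((n : ℝ) - 6) t (g n) a
      + ∫ s in (0 : ℝ)..t,
          Tc ((n : ℝ) - 6) (t - s) (fun b => GammaW β n0 (f s) * Jtr β n0 (f s) n b) a)

/-- Admissible state for the truncated system: nonnegative, `L¹`-regular with positive
area, zero polyhedral defect, and vanishing boundary values for `n > 6`. -/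
def AdmissibleState (n0 : ℕ) (F : ℕ → ℝ → ℝ) : Prop :=
  (∀ n, 2 ≤ n → n ≤ n0 → ∀ a, 0 ≤ a → 0 ≤ F n a) ∧
  (∀ n, 2 ≤ n → n ≤ n0 → IntegrableOn (fun a => (1 + a) * F n a) (Ioi 0)) ∧
  0 < Agr n0 F ∧ Pgr n0 F = 0 ∧ (∀ n, 6 < n → n ≤ n0 → F n 0 = 0)

/-! Infinite system quantities (sums over `n ≥ 2` realised as `∑'` over `k ↦ k + 2`). -/

/-- `Γ_N(f) = Σ_{n≥2}(n−6)² f_n(0)`. -/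
def GammaNInf (f : ℕ → ℝ → ℝ) : ℝ := ∑' k : ℕ, ((k : ℝ) + 2 - 6) ^ 2 * f (k + 2) 0

/-- `Γ_D(f) = Σ_{n≥2} n ∫_0^∞ f_n − 2(β+1) ∫_0^∞ f_2`. -/
def GammaDInf (β : ℝ) (f : ℕ → ℝ → ℝ) : ℝ :=
  (∑' k : ℕ, ((k : ℝ) + 2) * ∫ a in Ioi (0 : ℝ), f (k + 2) a)
  - 2 * (β + 1) * ∫ a in Ioi (0 : ℝ), f 2 a

/-- `Γ(f) = Γ_N(f)/Γ_D(f)` for the infinite system. -/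
def GammaWInf (β : ℝ) (f : ℕ → ℝ → ℝ) : ℝ := GammaNInf f / GammaDInf β f

/-- `N(f) = Σ_{n≥2} ∫_0^∞ f_n`. -/
def NgrInf (f : ℕ → ℝ → ℝ) : ℝ := ∑' k : ℕ, ∫ a in Ioi (0 : ℝ), f (k + 2) a

/-- `A(f) = Σ_{n≥2} ∫_0^∞ a f_n`. -/
def AgrInf (f : ℕ → ℝ → ℝ) : ℝ := ∑' k : ℕ, ∫ a in Ioi (0 : ℝ), a * f (k + 2) a

/-- `P(f) = Σ_{n≥2} (n−6) ∫_0^∞ f_n`. -/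
def PgrInf (f : ℕ → ℝ → ℝ) : ℝ :=
  ∑' k : ℕ, ((k : ℝ) + 2 - 6) * ∫ a in Ioi (0 : ℝ), f (k + 2) a

/-- Second quasi-complement for the infinite system:
`M⊥(f,α) = Σ_{n≥2} ∫_α^∞ a f_n + Σ_{n≥⌊α⌋+1} n ∫_0^∞ f_n`. -/
def MperpInf (f : ℕ → ℝ → ℝ) (α : ℝ) : ℝ :=
  (∑' k : ℕ, ∫ a in Ioi α, a * f (k + 2) a)
  + ∑' k : ℕ, (if ⌊α⌋₊ + 1 ≤ k + 2 then ((k : ℝ) + 2) * ∫ a in Ioi (0 : ℝ), f (k + 2) a else 0)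

/-- Left-shift operator `(S⁺_δ f)(a) = f(a−δ)` for `a ≥ δ` and `0` otherwise. -/
def Splus (δ : ℝ) (f : ℕ → ℝ → ℝ) (n : ℕ) (a : ℝ) : ℝ :=
  if δ ≤ a then f n (a - δ) else 0

/-- Mild solution of the infinite kinetic grain-growth system on `[0,T]`. -/
def IsMildInf (β : ℝ) (T : ℝ) (g : ℕ → ℝ → ℝ) (f : ℝ → ℕ → ℝ → ℝ) : Prop :=
  (∀ n, 2 ≤ n → ContinuousOn (fun p : ℝ × ℝ => f p.1 n p.2) (Icc 0 T ×ˢ Ici 0)) ∧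
  (∀ t ∈ Icc (0 : ℝ) T, BddAbove (bnormSetInf β (f t))) ∧
  (∀ t ∈ Icc (0 : ℝ) T, ∀ n : ℕ, 2 ≤ n →
      IntegrableOn (fun a => ((n : ℝ) + a) * |f t n a|) (Ioi 0)) ∧
  (∀ t ∈ Icc (0 : ℝ) T,
      Summable (fun k : ℕ => ∫ a in Ioi (0 : ℝ), ((k : ℝ) + 2 + a) * |f t (k + 2) a|)) ∧
  (∀ t ∈ Icc (0 : ℝ) T, ∀ n, 2 ≤ n → ∀ a, 0 ≤ a →
    f t n a = Tc ((n : ℝ) - 6) t (g n) a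
      + ∫ s in (0 : ℝ)..t,
          Tc ((n : ℝ) - 6) (t - s) (fun b => GammaWInf β (f s) * Jinf β (f s) n b) a)

/-- Admissible state for the infinite system. -/
def AdmissibleInf (f : ℕ → ℝ → ℝ) : Prop :=
  (∀ n, 2 ≤ n → ∀ a, 0 ≤ a → 0 ≤ f n a) ∧
  0 < AgrInf f ∧ PgrInf f = 0 ∧ (∀ n, 6 < n → f n 0 = 0)

/-- Regular state: equi-continuous w.r.t. `⦀·⦀` and rapidly decreasing in `n` and `a`. -/
def RegularInf (β : ℝ) (f : ℕ → ℝ → ℝ) : Prop :=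
  (∀ ε > (0 : ℝ), ∃ δbar > (0 : ℝ), ∀ δ, 0 ≤ δ → δ ≤ δbar →
      bnormInf β (fun n a => Splus δ f n a - f n a) ≤ ε) ∧
  (∃ d > (0 : ℝ), ∃ D > (0 : ℝ), ∀ α, 0 ≤ α → MperpInf f α ≤ D * Real.exp (-d * α))

/-- Energy distance
`ℰ(f,g) = Σ_{n≥2} n ∫_0^∞ e^{−a}(f_n−g_n)² da + (N(f)−N(g))²`. -/
def EnergyDist (f g : ℕ → ℝ → ℝ) : ℝ :=
  (∑' k : ℕ, ((k : ℝ) + 2) *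
      ∫ a in Ioi (0 : ℝ), Real.exp (-a) * (f (k + 2) a - g (k + 2) a) ^ 2)
  + (NgrInf f - NgrInf g) ^ 2


lemma sum_id_GG (β : ℝ) (I : ℕ → ℝ) :
    ∀ n0 : ℕ, 4 ≤ n0 →
    ∑ n ∈ Finset.Icc 2 n0, (n : ℝ) *
      (if n = 2 then 3 * (β + 1) * I 3 - 2 * β * I 2
       else if n = n0 then β * ((n0 : ℝ) - 1) * I (n0 - 1) - (β + 1) * (n0 : ℝ) * I n0
       else (β + 1) * ((n : ℝ) + 1) * I (n + 1) - (2 * β + 1) * (n : ℝ) * I n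
            + β * ((n : ℝ) - 1) * I (n - 1))
    = -(∑ n ∈ Finset.Icc 2 n0, (n : ℝ) * I n) + (2 * β + 2) * I 2 - β * (n0 : ℝ) * I n0 := by
  intro n0 hn0
  induction n0, hn0 using Nat.le_induction with
  | base =>
      rw [show Finset.Icc 2 4 = {2, 3, 4} from rfl]
      norm_num [Finset.sum_insert, Finset.mem_insert]
      ring
  | succ n hn ih =>
      have h2 : (2 : ℕ) ≤ n + 1 := by omega
      have h2' : (2 : ℕ) ≤ n := by omega
      rw [Finset.sum_Icc_succ_top h2, Finset.sum_Icc_succ_top h2]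
      have hcongr : ∑ k ∈ Finset.Icc 2 n, (k : ℝ) *
          (if k = 2 then 3 * (β + 1) * I 3 - 2 * β * I 2
           else if k = n + 1 then β * (((n+1 : ℕ) : ℝ) - 1) * I ((n+1) - 1) - (β + 1) * ((n+1 : ℕ) : ℝ) * I (n+1)
           else (β + 1) * ((k : ℝ) + 1) * I (k + 1) - (2 * β + 1) * (k : ℝ) * I k
                + β * ((k : ℝ) - 1) * I (k - 1))
        = ∑ k ∈ Finset.Icc 2 n, ((k : ℝ) *
          (if k = 2 then 3 * (β + 1) * I 3 - 2 * β * I 2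
           else if k = n then β * ((n : ℝ) - 1) * I (n - 1) - (β + 1) * (n : ℝ) * I n
           else (β + 1) * ((k : ℝ) + 1) * I (k + 1) - (2 * β + 1) * (k : ℝ) * I k
                + β * ((k : ℝ) - 1) * I (k - 1))
          + (if k = n then
              ((n : ℝ) * ((β + 1) * ((n : ℝ) + 1) * I (n + 1) - (2 * β + 1) * (n : ℝ) * I n
                + β * ((n : ℝ) - 1) * I (n - 1))
               - (n : ℝ) * (β * ((n : ℝ) - 1) * I (n - 1) - (β + 1) * (n : ℝ) * I n)) else 0)) := by
        refine Finset.sum_congr rfl fun k hk => ?_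
        simp only [Finset.mem_Icc] at hk
        by_cases hk2 : k = 2
        · subst hk2
          rw [if_pos rfl, if_pos rfl, if_neg (show (2:ℕ) ≠ n by omega), add_zero]
        · rw [if_neg hk2, if_neg hk2]
          by_cases hkn : k = n
          · subst hkn
            rw [if_neg (by omega : k ≠ k + 1), if_pos rfl, if_pos rfl]
            ring
          · rw [if_neg (by omega : k ≠ n + 1), if_neg hkn, if_neg hkn, add_zero]
      rw [hcongr, Finset.sum_add_distrib, Finset.sum_ite_eq' (Finset.Icc 2 n) n,
        if_pos (by simp [Finset.mem_Icc]; omega), ih]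
      rw [if_neg (by omega : n + 1 ≠ 2), if_pos rfl]
      have e1 : (n + 1 : ℕ) - 1 = n := by omega
      rw [e1]
      push_cast
      ring

private lemma int_comb2 (c d : ℝ) (g h : ℝ → ℝ)
    (hg : IntegrableOn g (Ioi (0:ℝ))) (hh : IntegrableOn h (Ioi (0:ℝ))) :
    ∫ a in Ioi (0:ℝ), (c * g a - d * h a)
      = c * (∫ a in Ioi (0:ℝ), g a) - d * ∫ a in Ioi (0:ℝ), h a := by
  rw [integral_sub (hg.const_mul c) (hh.const_mul d), integral_const_mul, integral_const_mul]

private lemma int_comb3 (c d e : ℝ) (g h k : ℝ → ℝ)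
    (hg : IntegrableOn g (Ioi (0:ℝ))) (hh : IntegrableOn h (Ioi (0:ℝ)))
    (hk : IntegrableOn k (Ioi (0:ℝ))) :
    ∫ a in Ioi (0:ℝ), (c * g a - d * h a + e * k a)
      = c * (∫ a in Ioi (0:ℝ), g a) - d * (∫ a in Ioi (0:ℝ), h a)
        + e * ∫ a in Ioi (0:ℝ), k a := by
  have h1 : IntegrableOn (fun a => c * g a - d * h a) (Ioi (0:ℝ)) :=
    (hg.const_mul c).sub (hh.const_mul d)
  rw [integral_add h1 (hk.const_mul e), integral_sub (hg.const_mul c) (hh.const_mul d),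
    integral_const_mul, integral_const_mul, integral_const_mul]

/-- For nonnegative integrable tuples satisfying the polyhedral formula
`P(f) = 0`, one has `Γ_D(f) ≥ (6 − 2(β+1)) N(f) = (4 − 2β) N(f) ≥ 0`; in particular
`Γ_D(f) > 0` whenever `N(f) > 0`. -/
theorem gammaD_lower_bound (β : ℝ) (hβ0 : 0 < β) (hβ2 : β < 2)
    (n0 : ℕ) (hn0 : 6 < n0) (f : ℕ → ℝ → ℝ)
    (hpos : ∀ n, 2 ≤ n → n ≤ n0 → ∀ a : ℝ, 0 ≤ a → 0 ≤ f n a)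
    (hint : ∀ n, 2 ≤ n → n ≤ n0 → IntegrableOn (f n) (Ioi (0 : ℝ)))
    (hP : Pgr n0 f = 0) :
    (6 - 2 * (β + 1)) * Ngr n0 f ≤ GammaD β n0 f ∧
    (6 - 2 * (β + 1)) * Ngr n0 f = (4 - 2 * β) * Ngr n0 f ∧
    0 ≤ (4 - 2 * β) * Ngr n0 f ∧
    (0 < Ngr n0 f → 0 < GammaD β n0 f) := by
  set I : ℕ → ℝ := fun n => ∫ a in Ioi (0:ℝ), f n a with hI
  have hInonneg : ∀ n, 2 ≤ n → n ≤ n0 → 0 ≤ I n := by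
    intro n h1 h2
    exact setIntegral_nonneg measurableSet_Ioi fun a ha => hpos n h1 h2 a (le_of_lt ha)
  have hkey : ∀ n ∈ Finset.Icc 2 n0, (∫ a in Ioi (0:ℝ), Jtr β n0 f n a)
      = (if n = 2 then 3 * (β + 1) * I 3 - 2 * β * I 2
         else if n = n0 then β * ((n0 : ℝ) - 1) * I (n0 - 1) - (β + 1) * (n0 : ℝ) * I n0
         else (β + 1) * ((n : ℝ) + 1) * I (n + 1) - (2 * β + 1) * (n : ℝ) * I n
              + β * ((n : ℝ) - 1) * I (n - 1)) := by
    intro n hn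
    simp only [Finset.mem_Icc] at hn
    by_cases h2 : n = 2
    · subst h2
      simp only [Jtr, if_pos rfl]
      exact int_comb2 _ _ _ _ (hint 3 (by omega) (by omega)) (hint 2 (by omega) (by omega))
    · by_cases hn0' : n = n0
      · subst hn0'
        simp only [Jtr, if_neg h2, if_pos rfl]
        exact int_comb2 _ _ _ _ (hint (n - 1) (by omega) (by omega)) (hint n (by omega) (by omega))
      · simp only [Jtr, if_neg h2, if_neg hn0']
        exact int_comb3 _ _ _ _ _ _ (hint (n + 1) (by omega) (by omega))
          (hint n (by omega) (by omega)) (hint (n - 1) (by omega) (by omega))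
  have hsum : ∑ n ∈ Finset.Icc 2 n0, (n : ℝ) * ∫ a in Ioi (0:ℝ), Jtr β n0 f n a
      = -(∑ n ∈ Finset.Icc 2 n0, (n : ℝ) * I n) + (2 * β + 2) * I 2 - β * (n0 : ℝ) * I n0 := by
    rw [Finset.sum_congr rfl fun n hn => by rw [hkey n hn]]
    exact sum_id_GG β I n0 (by omega)
  have hGD : GammaD β n0 f
      = (∑ n ∈ Finset.Icc 2 n0, (n : ℝ) * I n) - (2 * β + 2) * I 2 + β * (n0 : ℝ) * I n0 := by
    rw [GammaD, hsum]; ring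
  have hN : Ngr n0 f = ∑ n ∈ Finset.Icc 2 n0, I n := rfl
  have hNnonneg : 0 ≤ Ngr n0 f := by
    rw [hN]
    exact Finset.sum_nonneg fun n hn => by
      simp only [Finset.mem_Icc] at hn; exact hInonneg n hn.1 hn.2
  have hPsum : ∑ n ∈ Finset.Icc 2 n0, (n : ℝ) * I n = 6 * Ngr n0 f := by
    have h1 : Pgr n0 f = (∑ n ∈ Finset.Icc 2 n0, (n : ℝ) * I n) - 6 * Ngr n0 f := by
      rw [Pgr, hN, Finset.mul_sum, ← Finset.sum_sub_distrib]
      exact Finset.sum_congr rfl fun n hn => by ring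
    have := hP
    rw [h1] at this
    linarith
  have hI2 : I 2 ≤ Ngr n0 f := by
    rw [hN]
    refine Finset.single_le_sum (fun n hn => ?_) (by simp [Finset.mem_Icc]; omega)
    simp only [Finset.mem_Icc] at hn; exact hInonneg n hn.1 hn.2
  have hIn0 : 0 ≤ I n0 := hInonneg n0 (by omega) le_rfl
  have hβn0 : 0 ≤ β * (n0 : ℝ) * I n0 := by positivity
  have hcoef : 0 < 2 * β + 2 := by linarith
  have hmain : (4 - 2 * β) * Ngr n0 f ≤ GammaD β n0 f := by
    rw [hGD, hPsum]
    nlinarith [mul_le_mul_of_nonneg_left hI2 (le_of_lt hcoef)]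
  refine ⟨by linarith [hmain, (by ring : (6 - 2 * (β + 1)) * Ngr n0 f = (4 - 2 * β) * Ngr n0 f)],
    by ring, ?_, ?_⟩
  · have : 0 < 4 - 2 * β := by linarith
    positivity
  · intro hNpos
    have : 0 < (4 - 2 * β) * Ngr n0 f := by
      have : 0 < 4 - 2 * β := by linarith
      positivity
    linarith


end GrainGrowth
end
end

section
/- Let n_0 > 6 be an integer and define φ_n = (1/(nβ)) (β/(1+β))^n for 2 ≤ n ≤ n_0. Then (Jφ)_n = 0 for every 2 ≤ n ≤ n_0, where J = J_+ − J_− is the truncated collision operator; equivalently, the constant-in-time and constant-in-area family f̄_n(a,t) = φ_n solves the system ∂_t f_n + (n−6)∂_a f_n = Γ(t)(Jf)_n for any weight Γ. -/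
open MeasureTheory Set

noncomputable section

namespace GrainGrowth

/-! `φ` is in detailed balance: with `r = β/(1+β)`, the flux `βnφ_n` from class `n` to `n+1`
equals the flux `(β+1)(n+1)φ_{n+1}` back, both being `rⁿ`. Every component of `Jφ` is a sum of
such flux differences, one at the ends `n = 2` and `n = n0` and two in between. -/

section DetailedBalance

variable {β : ℝ}

theorem mul_phiGG_eq_pow (hβ : β ≠ 0) {n : ℕ} (hn : n ≠ 0) :
    β * n * phiGG β n = (β / (1 + β)) ^ n := by
  have : (n : ℝ) ≠ 0 := Nat.cast_ne_zero.mpr hn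
  unfold phiGG
  field_simp

theorem succ_mul_phiGG_succ_eq_pow (hβ : β ≠ 0) (hβ' : 1 + β ≠ 0) (n : ℕ) :
    (β + 1) * (n + 1) * phiGG β (n + 1) = (β / (1 + β)) ^ n := by
  rw [phiGG, pow_succ, add_comm β 1]
  push_cast
  field_simp

theorem Jtr_phiGG_eq_zero (hβ : β ≠ 0) (hβ' : 1 + β ≠ 0) (n0 : ℕ) {n : ℕ} (hn : 2 ≤ n)
    (a : ℝ) : Jtr β n0 (fun m _ => phiGG β m) n a = 0 := by
  obtain ⟨k, rfl⟩ : ∃ k, n = k + 1 := ⟨n - 1, by omega⟩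
  have gain_k := mul_phiGG_eq_pow hβ (n := k) (by omega)
  have gain_succ := mul_phiGG_eq_pow hβ (n := k + 1) (by omega)
  have loss_succ := succ_mul_phiGG_succ_eq_pow hβ hβ' k
  have loss_succ_succ := succ_mul_phiGG_succ_eq_pow hβ hβ' (k + 1)
  unfold Jtr
  split_ifs with h2 htop
  · obtain rfl : k = 1 := by omega
    norm_num at gain_succ loss_succ_succ ⊢
    linear_combination loss_succ_succ - gain_succ
  · subst htop
    simp only [Nat.add_sub_cancel]
    push_cast at loss_succ ⊢
    linear_combination gain_k - loss_succ
  · simp only [Nat.add_sub_cancel]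
    push_cast at gain_succ loss_succ loss_succ_succ ⊢
    linear_combination loss_succ_succ - gain_succ - loss_succ + gain_k

end DetailedBalance

theorem phi_in_kernel_general (β : ℝ) (hβ0 : 0 < β) (n0 : ℕ) :
    (∀ n, 2 ≤ n → n ≤ n0 → ∀ a : ℝ, Jtr β n0 (fun m _ => phiGG β m) n a = 0) ∧
    (∀ Γ : ℝ → ℝ, ∀ n, 2 ≤ n → n ≤ n0 → ∀ a t : ℝ,
      deriv (fun _ : ℝ => phiGG β n) t
        + ((n : ℝ) - 6) * deriv (fun _ : ℝ => phiGG β n) a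
        = Γ t * Jtr β n0 (fun m _ => phiGG β m) n a) := by
  have hJ (n : ℕ) (hn : 2 ≤ n) (a : ℝ) : Jtr β n0 (fun m _ => phiGG β m) n a = 0 :=
    Jtr_phiGG_eq_zero hβ0.ne' (by positivity) n0 hn a
  refine ⟨fun n hn _ a => hJ n hn a, fun Γ n hn _ a t => ?_⟩
  simp [hJ n hn a]

/-- `φ_n = (1/(nβ))(β/(1+β))^n` satisfies `(Jφ)_n = 0` for all `2 ≤ n ≤ n0`;
equivalently, the constant family `f̄_n(a,t) = φ_n` solves
`∂_t f_n + (n−6)∂_a f_n = Γ(t)(Jf)_n` for any weight `Γ`. -/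
theorem phi_in_kernel (β : ℝ) (hβ0 : 0 < β) (hβ2 : β < 2) (n0 : ℕ) (hn0 : 6 < n0) :
    (∀ n, 2 ≤ n → n ≤ n0 → ∀ a : ℝ, Jtr β n0 (fun m _ => phiGG β m) n a = 0) ∧
    (∀ Γ : ℝ → ℝ, ∀ n, 2 ≤ n → n ≤ n0 → ∀ a t : ℝ,
      deriv (fun _ : ℝ => phiGG β n) t
        + ((n : ℝ) - 6) * deriv (fun _ : ℝ => phiGG β n) a
        = Γ t * Jtr β n0 (fun m _ => phiGG β m) n a) :=
  phi_in_kernel_general β hβ0 n0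

end GrainGrowth
end
end
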